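/- arXiv:1904.03936 — 3 statements merged into one kernel-verified Lean document; each statement's English description precedes it below -/
import Mathlib

section
/- Let n ≥ 1 and let y, q : Fin n → ℝ be probability vectors and p : Fin n → ℝ a probability vector with p c > 0 for every c. Let β ≥ 0 and set ε = β/(1+β). Then CE(y,p) + β·KL(q,p) = (1+β)·CE((1-ε)·y + ε·q, p) − β·H(q), i.e. the cross-entropy loss plus β times the KL adversarial regularizer equals (up to the positive factor 1+β and the additive term −β·H(q), which does not depend on p) the cross-entropy against the interpolated label (1-ε)·y + ε·q. -/
/-- A probability vector on `Fin n`. -/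
def IsProbVec {n : ℕ} (α : Fin n → ℝ) : Prop :=
  (∀ k, 0 ≤ α k) ∧ ∑ k, α k = 1

/-- Lemma 1 of the paper: the cross-entropy loss plus `β` times the KL adversarial
regularizer equals `(1+β)` times the cross entropy against the interpolated label
`(1-ε)·y + ε·q` minus `β` times the entropy of the adversarial label `q`, where
`ε = β/(1+β)`. -/
theorem cross_entropy_add_kl_eq_smoothed_label
    {n : ℕ} (hn : 1 ≤ n)
    (y q p : Fin n → ℝ)
    (hy : IsProbVec y) (hq : IsProbVec q) (hp : IsProbVec p)
    (hppos : ∀ c, 0 < p c)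
    (β : ℝ) (hβ : 0 ≤ β)
    (ε : ℝ) (hε : ε = β / (1 + β)) :
    (-∑ c, y c * Real.log (p c)) + β * (∑ c, q c * Real.log (q c / p c)) =
      (1 + β) * (-∑ c, ((1 - ε) * y c + ε * q c) * Real.log (p c))
        - β * (-∑ c, q c * Real.log (q c)) := by
  have hb1 : (0:ℝ) < 1 + β := by linarith
  have h1 : (1 + β) * ε = β := by
    rw [hε]; field_simp
  have hkl : ∀ c, q c * Real.log (q c / p c)
      = q c * Real.log (q c) - q c * Real.log (p c) := by
    intro c
    rcases eq_or_lt_of_le (hq.1 c) with h | h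
    · simp [← h]
    · rw [Real.log_div (ne_of_gt h) (ne_of_gt (hppos c))]; ring
  have key : ∀ c, (1 + β) * (((1 - ε) * y c + ε * q c) * Real.log (p c))
      = y c * Real.log (p c) + β * (q c * Real.log (p c)) := by
    intro c
    linear_combination (q c - y c) * Real.log (p c) * h1
  have keysum : (1 + β) * ∑ c, ((1 - ε) * y c + ε * q c) * Real.log (p c)
      = (∑ c, y c * Real.log (p c)) + β * ∑ c, q c * Real.log (p c) := by
    rw [Finset.mul_sum, Finset.mul_sum]
    rw [← Finset.sum_add_distrib]
    exact Finset.sum_congr rfl fun c _ => key c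
  rw [mul_neg, keysum]
  simp only [hkl, Finset.sum_sub_distrib]
  ring
end

section
/- Let n ≥ 2, let α, β : Fin n → ℝ be probability vectors, and let C : Fin n → Fin n → ℝ be a symmetric cost matrix with C k k = 0 for all k and C i j ≥ 0 for all i, j. For each k set c̲_k = min over j ≠ k of C k j, and set c̲ = min over pairs i ≠ j of C i j. Then for every coupling T of α and β: c̲ · (1/2) Σ_k |α k − β k| ≤ (1/2) Σ_k c̲_k · |α k − β k| ≤ Σ_{i,j} T i j * C i j. In particular, the transport cost of any (in particular any entropic-regularized optimal) coupling is bounded below by the weighted total variation between α and β with weights c̲_k. -/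
/-- A coupling of two probability vectors `α` and `β` on `Fin n`. -/
def IsCoupling {n : ℕ} (α β : Fin n → ℝ) (T : Fin n → Fin n → ℝ) : Prop :=
  (∀ i j, 0 ≤ T i j) ∧ (∀ i, ∑ j, T i j = α i) ∧ (∀ j, ∑ i, T i j = β j)

open Finset

section OffDiagInf

variable {ι : Type*}

/-- The weight `c̲_k` of the paper. -/
noncomputable def offDiagRowInf (C : ι → ι → ℝ) (k : ι) : ℝ :=
  sInf {x | ∃ j, j ≠ k ∧ C k j = x}

/-- The constant `c̲` of the paper. -/
noncomputable def offDiagInf (C : ι → ι → ℝ) : ℝ :=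
  sInf {x | ∃ i j, i ≠ j ∧ C i j = x}

variable {C : ι → ι → ℝ}

theorem offDiagRowInf_nonneg (hpos : ∀ i j, 0 ≤ C i j) (k : ι) : 0 ≤ offDiagRowInf C k :=
  Real.sInf_nonneg <| by rintro x ⟨j, -, rfl⟩; exact hpos k j

theorem offDiagRowInf_le (hpos : ∀ i j, 0 ≤ C i j) {k j : ι} (hjk : j ≠ k) :
    offDiagRowInf C k ≤ C k j :=
  csInf_le ⟨0, by rintro x ⟨j, -, rfl⟩; exact hpos k j⟩ ⟨j, hjk, rfl⟩

theorem offDiagInf_le_offDiagRowInf [Nontrivial ι] (hpos : ∀ i j, 0 ≤ C i j) (k : ι) :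
    offDiagInf C ≤ offDiagRowInf C k := by
  obtain ⟨j, hjk⟩ := exists_ne k
  refine csInf_le_csInf ⟨0, ?_⟩ ⟨C k j, j, hjk, rfl⟩ ?_
  · rintro x ⟨i, j, -, rfl⟩
    exact hpos i j
  · rintro x ⟨j, hjk, rfl⟩
    exact ⟨k, j, hjk.symm, rfl⟩

end OffDiagInf

theorem abs_sub_le_sub_add_sub {a b t : ℝ} (ha : t ≤ a) (hb : t ≤ b) :
    |a - b| ≤ (a - t) + (b - t) :=
  abs_sub_le_iff.mpr ⟨by linarith, by linarith⟩

theorem mul_sum_sub_le_sum_mul {ι : Type*} [Fintype ι] [DecidableEq ι] {t c : ι → ℝ}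
    {w : ℝ} (i : ι) (ht : ∀ j, 0 ≤ t j) (hc : ∀ j, 0 ≤ c j) (hw : ∀ j, j ≠ i → w ≤ c j) :
    w * (∑ j, t j - t i) ≤ ∑ j, t j * c j := by
  rw [← add_sum_erase _ _ (mem_univ i), ← add_sum_erase _ _ (mem_univ i), add_sub_cancel_left,
    mul_sum]
  have hdiag : 0 ≤ t i * c i := mul_nonneg (ht i) (hc i)
  have hoff : ∑ j ∈ univ.erase i, w * t j ≤ ∑ j ∈ univ.erase i, t j * c j :=
    sum_le_sum fun j hj => by
      rw [mul_comm]
      exact mul_le_mul_of_nonneg_left (hw j (ne_of_mem_erase hj)) (ht j)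
  linarith

section Coupling

variable {n : ℕ} {α β : Fin n → ℝ} {C T : Fin n → Fin n → ℝ}

theorem IsCoupling.diag_le_left (hT : IsCoupling α β T) (k : Fin n) : T k k ≤ α k :=
  hT.2.1 k ▸ single_le_sum (fun j _ => hT.1 k j) (mem_univ k)

theorem IsCoupling.diag_le_right (hT : IsCoupling α β T) (k : Fin n) : T k k ≤ β k :=
  hT.2.2 k ▸ single_le_sum (fun i _ => hT.1 i k) (mem_univ k)

theorem IsCoupling.sum_offDiagRowInf_mul_left_le (hT : IsCoupling α β T)
    (hpos : ∀ i j, 0 ≤ C i j) :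
    ∑ k, offDiagRowInf C k * (α k - T k k) ≤ ∑ i, ∑ j, T i j * C i j :=
  sum_le_sum fun i _ => hT.2.1 i ▸
    mul_sum_sub_le_sum_mul i (hT.1 i) (hpos i) fun _ hj => offDiagRowInf_le hpos hj

theorem IsCoupling.sum_offDiagRowInf_mul_right_le (hT : IsCoupling α β T)
    (hsym : ∀ i j, C i j = C j i) (hpos : ∀ i j, 0 ≤ C i j) :
    ∑ k, offDiagRowInf C k * (β k - T k k) ≤ ∑ i, ∑ j, T i j * C i j := by
  rw [sum_comm]
  exact sum_le_sum fun j _ => hT.2.2 j ▸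
    mul_sum_sub_le_sum_mul j (fun i => hT.1 i j) (fun i => hpos i j)
      fun i hi => hsym i j ▸ offDiagRowInf_le hpos hi

theorem IsCoupling.sum_offDiagRowInf_mul_abs_sub_le (hT : IsCoupling α β T)
    (hsym : ∀ i j, C i j = C j i) (hpos : ∀ i j, 0 ≤ C i j) :
    ∑ k, offDiagRowInf C k * |α k - β k| ≤ 2 * ∑ i, ∑ j, T i j * C i j :=
  calc ∑ k, offDiagRowInf C k * |α k - β k|
      ≤ ∑ k, offDiagRowInf C k * ((α k - T k k) + (β k - T k k)) :=
        sum_le_sum fun k _ => mul_le_mul_of_nonneg_left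
          (abs_sub_le_sub_add_sub (hT.diag_le_left k) (hT.diag_le_right k))
          (offDiagRowInf_nonneg hpos k)
    _ = ∑ k, offDiagRowInf C k * (α k - T k k) + ∑ k, offDiagRowInf C k * (β k - T k k) := by
        simp only [mul_add, sum_add_distrib]
    _ ≤ 2 * ∑ i, ∑ j, T i j * C i j := by
        linarith [hT.sum_offDiagRowInf_mul_left_le hpos,
          hT.sum_offDiagRowInf_mul_right_le hsym hpos]

end Coupling

theorem transport_cost_ge_weighted_tv_general
    {n : ℕ} (hn : 2 ≤ n)
    (α β : Fin n → ℝ)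
    (C : Fin n → Fin n → ℝ)
    (hsym : ∀ i j, C i j = C j i)
    (hpos : ∀ i j, 0 ≤ C i j)
    (T : Fin n → Fin n → ℝ) (hT : IsCoupling α β T) :
    (sInf {x | ∃ i j, i ≠ j ∧ C i j = x}) * ((1 / 2) * ∑ k, |α k - β k|) ≤
        (1 / 2) * ∑ k, (sInf {x | ∃ j, j ≠ k ∧ C k j = x}) * |α k - β k| ∧
      (1 / 2) * ∑ k, (sInf {x | ∃ j, j ≠ k ∧ C k j = x}) * |α k - β k| ≤
        ∑ i, ∑ j, T i j * C i j := by
  have : Nontrivial (Fin n) := Fin.nontrivial_iff_two_le.mpr hn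
  change offDiagInf C * _ ≤ 1 / 2 * ∑ k, offDiagRowInf C k * _ ∧
    1 / 2 * ∑ k, offDiagRowInf C k * _ ≤ _
  constructor
  · rw [mul_left_comm, mul_sum]
    gcongr with k
    exact offDiagInf_le_offDiagRowInf hpos k
  · linarith [hT.sum_offDiagRowInf_mul_abs_sub_le hsym hpos]

/-- Lemma 2 of the paper: for a symmetric nonnegative cost matrix with zero diagonal,
the transport cost of any coupling of `α` and `β` is bounded below by the weighted total
variation `(1/2) Σ_k c̲_k |α k − β k|` with weights `c̲_k = min_{j ≠ k} C k j`, which is in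
turn bounded below by `c̲ · TV(α, β)` where `c̲ = min_{i ≠ j} C i j`. -/
theorem transport_cost_ge_weighted_tv
    {n : ℕ} (hn : 2 ≤ n)
    (α β : Fin n → ℝ) (hα : IsProbVec α) (hβ : IsProbVec β)
    (C : Fin n → Fin n → ℝ)
    (hsym : ∀ i j, C i j = C j i)
    (hdiag : ∀ k, C k k = 0)
    (hpos : ∀ i j, 0 ≤ C i j)
    (T : Fin n → Fin n → ℝ) (hT : IsCoupling α β T) :
    (sInf {x | ∃ i j, i ≠ j ∧ C i j = x}) * ((1 / 2) * ∑ k, |α k - β k|) ≤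
        (1 / 2) * ∑ k, (sInf {x | ∃ j, j ≠ k ∧ C k j = x}) * |α k - β k| ∧
      (1 / 2) * ∑ k, (sInf {x | ∃ j, j ≠ k ∧ C k j = x}) * |α k - β k| ≤
        ∑ i, ∑ j, T i j * C i j :=
  transport_cost_ge_weighted_tv_general hn α β C hsym hpos T hT
end

section
/- Let n ≥ 2, let α, β : Fin n → ℝ be probability vectors, and let C : Fin n → Fin n → ℝ satisfy C k k = 0 and C i j ≥ 0 for all i, j. For each k set c̄_k = max over j ≠ k of C k j. Then there exists a coupling T of α and β with Σ_{i,j} T i j * C i j ≤ Σ_k c̄_k · max(α k − β k, 0); in particular the minimal transport cost between α and β with respect to C is bounded above by the weighted total variation Σ_k c̄_k · |α k − β k|. -/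
/-- Remark after Lemma 2 of the paper: for a nonnegative cost matrix with zero diagonal,
there exists a coupling of `α` and `β` whose transport cost is at most
`Σ_k c̄_k · max(α k − β k, 0)` where `c̄_k = max_{j ≠ k} C k j`; in particular the minimal
transport cost is bounded above by the weighted total variation `Σ_k c̄_k · |α k − β k|`. -/
theorem exists_coupling_cost_le_weighted_tv
    {n : ℕ} (hn : 2 ≤ n)
    (α β : Fin n → ℝ) (hα : IsProbVec α) (hβ : IsProbVec β)
    (C : Fin n → Fin n → ℝ)
    (hdiag : ∀ k, C k k = 0)
    (hpos : ∀ i j, 0 ≤ C i j) :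
    (∃ T : Fin n → Fin n → ℝ, IsCoupling α β T ∧
        ∑ i, ∑ j, T i j * C i j ≤
          ∑ k, (sSup {x | ∃ j, j ≠ k ∧ C k j = x}) * max (α k - β k) 0) ∧
      (∃ T : Fin n → Fin n → ℝ, IsCoupling α β T ∧
        ∑ i, ∑ j, T i j * C i j ≤
          ∑ k, (sSup {x | ∃ j, j ≠ k ∧ C k j = x}) * |α k - β k|) := by
  obtain ⟨hα0, hα1⟩ := hα
  obtain ⟨hβ0, hβ1⟩ := hβ
  set c : Fin n → ℝ := fun k => sSup {x | ∃ j, j ≠ k ∧ C k j = x} with hcdef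
  have hne : ∀ k : Fin n, ∃ j : Fin n, j ≠ k := by
    intro k
    have : Nontrivial (Fin n) := Fin.nontrivial_iff_two_le.mpr hn
    exact exists_ne k
  have hbdd : ∀ k, BddAbove {x | ∃ j, j ≠ k ∧ C k j = x} := by
    intro k
    have hsub : {x | ∃ j, j ≠ k ∧ C k j = x} ⊆ Set.range (C k) := by
      rintro x ⟨j, _, rfl⟩; exact ⟨j, rfl⟩
    exact (Set.finite_range (C k)).bddAbove.mono hsub
  have hcle : ∀ k j, j ≠ k → C k j ≤ c k := fun k j hj =>
    le_csSup (hbdd k) ⟨j, hj, rfl⟩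
  have hc0 : ∀ k, 0 ≤ c k := by
    intro k
    obtain ⟨j, hj⟩ := hne k
    exact le_trans (hpos k j) (hcle k j hj)
  set p : Fin n → ℝ := fun k => max (α k - β k) 0 with hp
  set q : Fin n → ℝ := fun k => max (β k - α k) 0 with hq
  set γ : Fin n → ℝ := fun k => min (α k) (β k) with hγ
  have hp0 : ∀ k, 0 ≤ p k := fun k => le_max_right _ _
  have hq0 : ∀ k, 0 ≤ q k := fun k => le_max_right _ _
  have hγ0 : ∀ k, 0 ≤ γ k := fun k => le_min (hα0 k) (hβ0 k)
  have hγp : ∀ k, γ k + p k = α k := by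
    intro k; simp only [hp, hγ]
    rcases le_total (α k) (β k) with h | h
    · rw [min_eq_left h, max_eq_right (by linarith)]; ring
    · rw [min_eq_right h, max_eq_left (by linarith)]; ring
  have hγq : ∀ k, γ k + q k = β k := by
    intro k; simp only [hq, hγ]
    rcases le_total (α k) (β k) with h | h
    · rw [min_eq_left h, max_eq_left (by linarith)]; ring
    · rw [min_eq_right h, max_eq_right (by linarith)]; ring
  have hpq : ∀ k, p k * q k = 0 := by
    intro k
    rcases le_total (α k) (β k) with h | h
    · have : p k = 0 := max_eq_right (by linarith)
      rw [this]; ring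
    · have : q k = 0 := max_eq_right (by linarith)
      rw [this]; ring
  set s : ℝ := ∑ k, p k with hs
  have hsq : ∑ k, q k = s := by
    have h1 : ∀ k, p k - q k = α k - β k := by
      intro k; have h2 := hγp k; have h3 := hγq k; linarith
    have h4 : ∑ k, (p k - q k) = 0 := by
      rw [Finset.sum_congr rfl (fun k _ => h1 k), Finset.sum_sub_distrib, hα1, hβ1]; ring
    rw [Finset.sum_sub_distrib] at h4
    linarith
  have key : ∃ T : Fin n → Fin n → ℝ, IsCoupling α β T ∧
      ∑ i, ∑ j, T i j * C i j ≤ ∑ k, c k * p k := by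
    rcases eq_or_lt_of_le (Finset.sum_nonneg (fun k _ => hp0 k) : (0:ℝ) ≤ s) with hs0 | hs0
    · -- s = 0 : α = β, use diagonal coupling
      have hpz : ∀ k, p k = 0 := by
        intro k
        exact (Finset.sum_eq_zero_iff_of_nonneg (fun k _ => hp0 k)).mp hs0.symm k
          (Finset.mem_univ k)
      have hqz : ∀ k, q k = 0 := by
        intro k
        have hz : ∑ k, q k = 0 := by rw [hsq]; exact hs0.symm
        exact (Finset.sum_eq_zero_iff_of_nonneg (fun k _ => hq0 k)).mp hz k (Finset.mem_univ k)
      have hab : ∀ k, α k = β k := by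
        intro k; have h2 := hγp k; have h3 := hγq k; have := hpz k; have := hqz k; linarith
      refine ⟨fun i j => if i = j then α i else 0, ⟨?_, ?_, ?_⟩, ?_⟩
      · intro i j; dsimp only; split
        · exact hα0 i
        · exact le_refl 0
      · intro i; simp
      · intro j
        dsimp only
        rw [show (∑ i, if i = j then α i else 0) = α j by simp, hab j]
      · dsimp only
        have hzero : ∀ i, ∑ j, (if i = j then α i else 0) * C i j = 0 := by
          intro i
          apply Finset.sum_eq_zero
          intro j _
          by_cases h : i = j
          · subst h; rw [hdiag i]; ring
          · simp [h]
        rw [Finset.sum_congr rfl (fun i _ => hzero i), Finset.sum_const, smul_zero]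
        exact Finset.sum_nonneg fun k _ => mul_nonneg (hc0 k) (hp0 k)
    · -- s > 0 : proportional coupling
      have hsne : s ≠ 0 := ne_of_gt hs0
      refine ⟨fun i j => (if i = j then γ i else 0) + p i * q j / s, ⟨?_, ?_, ?_⟩, ?_⟩
      · intro i j
        dsimp only
        have h1 : 0 ≤ p i * q j / s := div_nonneg (mul_nonneg (hp0 i) (hq0 j)) hs0.le
        split
        · linarith [hγ0 i]
        · linarith
      · intro i
        dsimp only
        rw [Finset.sum_add_distrib]
        have h1 : ∑ j, (if i = j then γ i else 0) = γ i := by simp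
        have h2 : ∑ j, p i * q j / s = p i := by
          rw [← Finset.sum_div, ← Finset.mul_sum, hsq, mul_div_assoc, div_self hsne, mul_one]
        rw [h1, h2, hγp i]
      · intro j
        dsimp only
        rw [Finset.sum_add_distrib]
        have h1 : ∑ i, (if i = j then γ i else 0) = γ j := by simp
        have h2 : ∑ i, p i * q j / s = q j := by
          have : ∀ i : Fin n, p i * q j / s = p i * (q j / s) := fun i => by ring
          rw [Finset.sum_congr rfl (fun i _ => this i), ← Finset.sum_mul, ← hs,
            mul_div_assoc']
          field_simp
        rw [h1, h2, hγq j]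
      · dsimp only
        have hterm : ∀ i j, ((if i = j then γ i else 0) + p i * q j / s) * C i j ≤
            p i * q j / s * c i := by
          intro i j
          by_cases h : i = j
          · subst h
            rw [hdiag i, mul_zero]
            exact div_nonneg (mul_nonneg (mul_nonneg (hp0 i) (hq0 i)) (hc0 i)) hs0.le
              |>.trans_eq (by ring)
          · simp only [if_neg h, zero_add]
            exact mul_le_mul_of_nonneg_left (hcle i j fun e => h e.symm)
              (div_nonneg (mul_nonneg (hp0 i) (hq0 j)) hs0.le)
        calc ∑ i, ∑ j, ((if i = j then γ i else 0) + p i * q j / s) * C i j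
            ≤ ∑ i, ∑ j, p i * q j / s * c i :=
              Finset.sum_le_sum fun i _ => Finset.sum_le_sum fun j _ => hterm i j
          _ = ∑ i, c i * p i := by
              apply Finset.sum_congr rfl
              intro i _
              have : ∀ j : Fin n, p i * q j / s * c i = q j * (p i / s * c i) := fun j => by ring
              rw [Finset.sum_congr rfl (fun j _ => this j), ← Finset.sum_mul, hsq]
              field_simp
  obtain ⟨T, hT, hcost⟩ := key
  constructor
  · exact ⟨T, hT, hcost⟩
  · refine ⟨T, hT, hcost.trans (Finset.sum_le_sum fun k _ => ?_)⟩
    exact mul_le_mul_of_nonneg_left (max_le (le_abs_self _) (abs_nonneg _)) (hc0 k)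
end
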